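/- arXiv:0808.2779 — 2 statements merged into one kernel-verified Lean document; each statement's English description precedes it below -/
import Mathlib

section
/- Let (δ, π) be a comonotonic cloud on a finite set X = {x₁, …, xₙ}, indexed so that i ≤ j implies δ(x_i) ≤ δ(x_j) and π(x_i) ≤ π(x_j) (such an indexing exists by comonotonicity). Then a probability distribution p on X belongs to 𝒫[δ,π] if and only if for every i ∈ {1, …, n−1}, δ(x_{i+1}) ≤ P({x₁, …, x_i}) ≤ π(x_i). In other words, the comonotonic cloud is representable as the generalized p-box with cumulative bounds F̲(x_i) = δ(x_{i+1}) (and F̲(xₙ) = 1) and F̄(x_i) = π(x_i) on the chain of sets A_i = {x₁, …, x_i}. -/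
/-!
When `δ` and `π` are monotone on a finite chain, every level set `{δ ≥ α}` and `{π > α}` is a
final segment `{x ≥ a}` or empty, so the cloud constraints only ever compare `α` with the mass of
a final segment. The binding choices of `α` are the values `δ a` and `π a` themselves, which turns
the constraints into `δ a ≤ P(x < a)` and `P(x ≤ a) ≤ π a`; on `Fin n` the end cases `a = 0` and
`a = n - 1` hold automatically because `δ` vanishes and `π` reaches `1`.
-/

open Finset

attribute [local instance] Classical.propDecidable

variable {X : Type*}

/-- A probability distribution on a finite set `X`. -/
def IsProbDist [Fintype X] (p : X → ℝ) : Prop :=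
  (∀ x, 0 ≤ p x ∧ p x ≤ 1) ∧ ∑ x, p x = 1

/-- A cloud on `X`: a pair `(δ, π)` of `[0,1]`-valued maps with `δ ≤ π`,
`π` reaching `1` and `δ` reaching `0`. -/
def IsCloud (δ π : X → ℝ) : Prop :=
  (∀ x, 0 ≤ δ x) ∧ (∀ x, π x ≤ 1) ∧ (∀ x, δ x ≤ π x) ∧ (∃ x, π x = 1) ∧ (∃ y, δ y = 0)

/-- The credal set of a cloud `(δ, π)`. -/
def credalCloud [Fintype X] (δ π : X → ℝ) : Set (X → ℝ) :=
  {p | IsProbDist p ∧ ∀ α : ℝ, 0 ≤ α → α ≤ 1 →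
    (∑ x ∈ univ.filter (fun x => α ≤ δ x), p x) ≤ 1 - α ∧
    1 - α ≤ ∑ x ∈ univ.filter (fun x => α < π x), p x}


/-- Two maps `δ, π : X → [0,1]` are comonotonic when there are no `x, y` with
`δ x < δ y` and `π x > π y`. -/
def Comonotonic (δ π : X → ℝ) : Prop := ∀ x y, δ x < δ y → π x ≤ π y

theorem sum_filter_not_eq_one_sub [Fintype X] {p : X → ℝ} (hp1 : ∑ x, p x = 1) (P : X → Prop)
    [DecidablePred P] :
    ∑ x ∈ univ.filter (fun x => ¬ P x), p x = 1 - ∑ x ∈ univ.filter P, p x := by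
  rw [← hp1, ← sum_filter_add_sum_filter_not univ P]
  ring

def LowerCloudCondition [Fintype X] (δ p : X → ℝ) : Prop :=
  ∀ α : ℝ, 0 ≤ α → α ≤ 1 → ∑ x ∈ univ.filter (fun x => α ≤ δ x), p x ≤ 1 - α

def UpperCloudCondition [Fintype X] (π p : X → ℝ) : Prop :=
  ∀ α : ℝ, 0 ≤ α → α ≤ 1 → 1 - α ≤ ∑ x ∈ univ.filter (fun x => α < π x), p x

theorem mem_credalCloud_iff [Fintype X] {δ π p : X → ℝ} :
    p ∈ credalCloud δ π ↔
      IsProbDist p ∧ LowerCloudCondition δ p ∧ UpperCloudCondition π p := by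
  simp only [credalCloud, LowerCloudCondition, UpperCloudCondition, Set.mem_ofPred_eq, imp_and,
    forall_and]

section LinearOrder

-- Taking the decidability of `≤` as an argument lets these lemmas specialize to `Fin n` with
-- `Fin`'s own instance, the one the main statement uses, instead of the classical one.
variable [Fintype X] [LinearOrder X] [DecidableLE X] {p : X → ℝ}

theorem lowerCloudCondition_iff [DecidableLT X] {δ : X → ℝ} (hδ : Monotone δ) (hδ0 : ∀ x, 0 ≤ δ x)
    (hδ1 : ∀ x, δ x ≤ 1) (hp0 : ∀ x, 0 ≤ p x) (hp1 : ∑ x, p x = 1) :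
    LowerCloudCondition δ p ↔ ∀ a, δ a ≤ ∑ x ∈ univ.filter (· < a), p x := by
  simp only [← not_le, sum_filter_not_eq_one_sub hp1]
  constructor
  · intro hlow a
    have hsub : univ.filter (a ≤ ·) ⊆ univ.filter (fun x => δ a ≤ δ x) :=
      monotone_filter_right _ fun x _ hx => hδ hx
    have := (sum_le_sum_of_subset_of_nonneg hsub fun x _ _ => hp0 x).trans
      (hlow _ (hδ0 a) (hδ1 a))
    linarith
  · intro hcdf α hα0 hα1
    rcases ((isUpperSet_Ici α).preimage hδ).eq_empty_or_Ici with hU | ⟨a, hU⟩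
    · have hU' (x : X) : ¬ α ≤ δ x := Set.eq_empty_iff_forall_notMem.mp hU x
      rw [filter_false_of_mem fun x _ => hU' x, sum_empty]
      linarith
    · have hU' (x : X) : α ≤ δ x ↔ a ≤ x := Set.ext_iff.mp hU x
      rw [filter_congr fun x _ => hU' x]
      linarith [hcdf a, (hU' a).mpr le_rfl]

theorem upperCloudCondition_iff {π : X → ℝ} (hπ : Monotone π) (hπ0 : ∀ x, 0 ≤ π x)
    (hπ1 : ∀ x, π x ≤ 1) (hp0 : ∀ x, 0 ≤ p x) (hp1 : ∑ x, p x = 1) :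
    UpperCloudCondition π p ↔ ∀ a, ∑ x ∈ univ.filter (· ≤ a), p x ≤ π a := by
  constructor
  · intro hup a
    have hsub : univ.filter (fun x => π a < π x) ⊆ univ.filter (fun x => ¬ x ≤ a) :=
      monotone_filter_right _ fun x _ hx hxa => (hπ hxa).not_gt hx
    have := (hup _ (hπ0 a) (hπ1 a)).trans (sum_le_sum_of_subset_of_nonneg hsub fun x _ _ => hp0 x)
    rw [sum_filter_not_eq_one_sub hp1] at this
    linarith
  · intro hcdf α hα0 hα1
    rcases ((isLowerSet_Iic α).preimage hπ).eq_empty_or_Iic with hL | ⟨a, hL⟩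
    · have hL' (x : X) : α < π x := not_le.mp (Set.eq_empty_iff_forall_notMem.mp hL x)
      rw [filter_true_of_mem fun x _ => hL' x, hp1]
      linarith
    · have hL' (x : X) : π x ≤ α ↔ x ≤ a := Set.ext_iff.mp hL x
      rw [filter_congr fun x _ => (not_le.symm.trans (not_congr (hL' x))),
        sum_filter_not_eq_one_sub hp1]
      linarith [hcdf a, (hL' a).mpr le_rfl]

end LinearOrder

section Fin

variable {n : ℕ} {p : Fin n → ℝ}

theorem filter_lt_mk_succ_eq_filter_le (i : Fin n) (hi : i.val + 1 < n) :
    univ.filter (· < (⟨i.val + 1, hi⟩ : Fin n)) = univ.filter (· ≤ i) := by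
  ext j
  simp only [mem_filter, mem_univ, true_and, Fin.lt_def, Fin.le_def]
  omega

theorem lowerCloudCondition_iff_fin {δ : Fin n → ℝ} (hδ : Monotone δ) (hδ0 : ∀ x, 0 ≤ δ x)
    (hδ1 : ∀ x, δ x ≤ 1) (hδbot : ∃ y, δ y = 0) (hp0 : ∀ x, 0 ≤ p x) (hp1 : ∑ x, p x = 1) :
    LowerCloudCondition δ p ↔
      ∀ i : Fin n, ∀ hi : i.val + 1 < n, δ ⟨i.val + 1, hi⟩ ≤ ∑ j ∈ univ.filter (· ≤ i), p j := by
  rw [lowerCloudCondition_iff hδ hδ0 hδ1 hp0 hp1]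
  refine ⟨fun h i hi => filter_lt_mk_succ_eq_filter_le i hi ▸ h _, fun h a => ?_⟩
  obtain ⟨_ | k, ha⟩ := a
  · obtain ⟨y, hy⟩ := hδbot
    calc δ ⟨0, ha⟩ ≤ δ y := hδ (Fin.le_def.mpr (Nat.zero_le _))
      _ = 0 := hy
      _ ≤ _ := sum_nonneg fun x _ => hp0 x
  · rw [filter_lt_mk_succ_eq_filter_le ⟨k, by omega⟩ ha]
    exact h ⟨k, by omega⟩ ha

theorem upperCloudCondition_iff_fin {π : Fin n → ℝ} (hπ : Monotone π) (hπ0 : ∀ x, 0 ≤ π x)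
    (hπ1 : ∀ x, π x ≤ 1) (hπtop : ∃ x, π x = 1) (hp0 : ∀ x, 0 ≤ p x) (hp1 : ∑ x, p x = 1) :
    UpperCloudCondition π p ↔
      ∀ i : Fin n, i.val + 1 < n → ∑ j ∈ univ.filter (· ≤ i), p j ≤ π i := by
  rw [upperCloudCondition_iff hπ hπ0 hπ1 hp0 hp1]
  refine ⟨fun h i _ => h i, fun h a => ?_⟩
  by_cases ha : a.val + 1 < n
  · exact h a ha
  · have ha_top (x : Fin n) : x ≤ a := Fin.le_def.mpr (by omega)
    obtain ⟨x, hx⟩ := hπtop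
    rw [filter_true_of_mem fun x _ => ha_top x, hp1, ← hx]
    exact hπ (ha_top x)

end Fin

theorem comonotonic_cloud_eq_genpbox_general {n : ℕ} (δ π : Fin n → ℝ) (h : IsCloud δ π)
    (hδm : Monotone δ) (hπm : Monotone π)
    (p : Fin n → ℝ) (hp : IsProbDist p) :
    p ∈ credalCloud δ π ↔
      ∀ i : Fin n, ∀ hi : i.val + 1 < n,
        δ ⟨i.val + 1, hi⟩ ≤ ∑ j ∈ univ.filter (fun j => j ≤ i), p j ∧
        ∑ j ∈ univ.filter (fun j => j ≤ i), p j ≤ π i := by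
  obtain ⟨hδ0, hπ1, hδπ, hπtop, hδbot⟩ := h
  have hπ0 x : 0 ≤ π x := (hδ0 x).trans (hδπ x)
  have hδ1 x : δ x ≤ 1 := (hδπ x).trans (hπ1 x)
  have hp0 x : 0 ≤ p x := (hp.1 x).1
  rw [mem_credalCloud_iff, lowerCloudCondition_iff_fin hδm hδ0 hδ1 hδbot hp0 hp.2,
    upperCloudCondition_iff_fin hπm hπ0 hπ1 hπtop hp0 hp.2]
  simp only [hp, true_and, ← forall_and]

/-- a comonotonic cloud `(δ, π)` on `X = {x₁, …, xₙ}` (indexed so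
that both `δ` and `π` are non-decreasing) is exactly the generalized p-box with
bounds `δ xᵢ₊₁ ≤ P({x₁, …, xᵢ}) ≤ π xᵢ` for `i ∈ {1, …, n-1}`: a probability
distribution belongs to the credal set of the cloud iff it satisfies these
`n - 1` pairs of inequalities. -/
theorem comonotonic_cloud_eq_genpbox {n : ℕ} (δ π : Fin n → ℝ) (h : IsCloud δ π)
    (hcom : Comonotonic δ π) (hδm : Monotone δ) (hπm : Monotone π)
    (p : Fin n → ℝ) (hp : IsProbDist p) :
    p ∈ credalCloud δ π ↔
      ∀ i : Fin n, ∀ hi : i.val + 1 < n,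
        δ ⟨i.val + 1, hi⟩ ≤ ∑ j ∈ univ.filter (fun j => j ≤ i), p j ∧
        ∑ j ∈ univ.filter (fun j => j ≤ i), p j ≤ π i :=
  comonotonic_cloud_eq_genpbox_general δ π h hδm hπm p hp
end

section
/- Let l, u : X → [0,1] be a probability interval on a finite set X with nonempty credal set 𝒫_L. Call a strict total order ≺ on X compatible if u(x) < l(y) implies x ≺ y, and call a compatible ≺ feasible if some p ∈ 𝒫_L is non-decreasing along ≺ (x ≺ y implies p(x) ≤ p(y)); at least one feasible order exists. For a feasible ≺ define π^≺(x) = max{ ∑_{y ⪯ x} p(y) : p ∈ 𝒫_L non-decreasing along ≺ } and δ^≺(x) = min{ ∑_{y ≺ x} p(y) : p ∈ 𝒫_L non-decreasing along ≺ } (where y ⪯ x means y ≺ x or y = x), and set π(x) = max over feasible ≺ of π^≺(x) and δ(x) = min over feasible ≺ of δ^≺(x). Then (δ, π) is a cloud on X and 𝒫_L ⊆ 𝒫[δ,π], i.e., the cloud outer-approximates the probability interval. -/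
open Finset

attribute [local instance] Classical.propDecidable

variable {X : Type*}

/-! The credal set `PL` of the probability interval is bracketed by the cumulative sums of each
of its members along an order that makes it non-decreasing: sorting `X` by the values of
`p ∈ PL` gives a feasible order, so `δ x ≤ ∑_{y ≺ x} p y` and `∑_{y ⪯ x} p y ≤ π x`.
Any such bracket forces the cloud axioms and the two cloud constraints on `p`: for a level `α`,
the `≺`-least point `m` of `{δ ≥ α}` leaves `∑_{y ≺ m} p y ≥ δ m ≥ α` of mass outside that set,
and the `≺`-largest point `m` of `{π ≤ α}` bounds its mass by `∑_{y ⪯ m} p y ≤ π m ≤ α`. -/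

open Function

namespace IsProbDist

variable [Fintype X] {p : X → ℝ}

lemma sum_nonneg (hp : IsProbDist p) (s : Finset X) : 0 ≤ ∑ x ∈ s, p x :=
  Finset.sum_nonneg fun x _ => (hp.1 x).1

lemma sum_le_one (hp : IsProbDist p) (s : Finset X) : ∑ x ∈ s, p x ≤ 1 :=
  hp.2 ▸ sum_le_sum_of_subset_of_nonneg (subset_univ s) fun x _ _ => (hp.1 x).1

lemma sum_compl (hp : IsProbDist p) (s : Finset X) : ∑ x ∈ sᶜ, p x = 1 - ∑ x ∈ s, p x := by
  rw [← hp.2, ← sum_compl_add_sum s]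
  ring

lemma nonempty (hp : IsProbDist p) : Nonempty X := by
  by_contra h
  have := hp.2
  simp_all

section Bracket

variable {β : Type*} [LinearOrder β] {f : X → β} {δ π : X → ℝ}

lemma sum_filter_ge_le (hp : IsProbDist p)
    (hδ : ∀ x, δ x ≤ ∑ y ∈ univ.filter (fun y => f y < f x), p y) {α : ℝ} (hα : α ≤ 1) :
    ∑ x ∈ univ.filter (fun x => α ≤ δ x), p x ≤ 1 - α := by
  set S := univ.filter (fun x => α ≤ δ x)
  obtain hS | hS := S.eq_empty_or_nonempty
  · simpa [hS] using hα
  obtain ⟨m, hmS, hm⟩ := S.exists_min_image f hS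
  have hsub : univ.filter (fun y => f y < f m) ⊆ Sᶜ := fun y hy =>
    mem_compl.2 fun hyS => (hm y hyS).not_gt (mem_filter.1 hy).2
  calc ∑ x ∈ S, p x = 1 - ∑ x ∈ Sᶜ, p x := by rw [hp.sum_compl, sub_sub_cancel]
    _ ≤ 1 - ∑ y ∈ univ.filter (fun y => f y < f m), p y := by
        gcongr 1 - ?_
        exact sum_le_sum_of_subset_of_nonneg hsub fun x _ _ => (hp.1 x).1
    _ ≤ 1 - α := by linarith [(mem_filter.1 hmS).2, hδ m]

lemma sum_filter_le_le (hp : IsProbDist p)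
    (hπ : ∀ x, ∑ y ∈ univ.filter (fun y => f y ≤ f x), p y ≤ π x) {α : ℝ} (hα : 0 ≤ α) :
    ∑ x ∈ univ.filter (fun x => π x ≤ α), p x ≤ α := by
  set T := univ.filter (fun x => π x ≤ α)
  obtain hT | hT := T.eq_empty_or_nonempty
  · simpa [hT] using hα
  obtain ⟨m, hmT, hm⟩ := T.exists_max_image f hT
  calc ∑ x ∈ T, p x ≤ ∑ y ∈ univ.filter (fun y => f y ≤ f m), p y :=
        sum_le_sum_of_subset_of_nonneg (fun y hy => mem_filter.2 ⟨mem_univ y, hm y hy⟩)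
          fun x _ _ => (hp.1 x).1
    _ ≤ α := (hπ m).trans (mem_filter.1 hmT).2

lemma mem_credalCloud (hp : IsProbDist p)
    (hδ : ∀ x, δ x ≤ ∑ y ∈ univ.filter (fun y => f y < f x), p y)
    (hπ : ∀ x, ∑ y ∈ univ.filter (fun y => f y ≤ f x), p y ≤ π x) :
    p ∈ credalCloud δ π := by
  refine ⟨hp, fun α hα₀ hα₁ => ⟨hp.sum_filter_ge_le hδ hα₁, ?_⟩⟩
  have hcompl : univ.filter (fun x => α < π x) = (univ.filter (fun x => π x ≤ α))ᶜ := by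
    ext x
    simp
  rw [hcompl, hp.sum_compl]
  linarith [hp.sum_filter_le_le hπ hα₀]

lemma isCloud (hp : IsProbDist p) (hδ₀ : ∀ x, 0 ≤ δ x) (hπ₁ : ∀ x, π x ≤ 1)
    (hδ : ∀ x, δ x ≤ ∑ y ∈ univ.filter (fun y => f y < f x), p y)
    (hπ : ∀ x, ∑ y ∈ univ.filter (fun y => f y ≤ f x), p y ≤ π x) :
    IsCloud δ π := by
  have := hp.nonempty
  obtain ⟨xmin, -, hxmin⟩ := univ.exists_min_image f univ_nonempty
  obtain ⟨xmax, -, hxmax⟩ := univ.exists_max_image f univ_nonempty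
  refine ⟨hδ₀, hπ₁, fun x => ?_, ⟨xmax, (hπ₁ xmax).antisymm ?_⟩, ⟨xmin, (hδ₀ xmin).antisymm' ?_⟩⟩
  · refine (hδ x).trans (le_trans ?_ (hπ x))
    exact sum_le_sum_of_subset_of_nonneg (monotone_filter_right _ fun y _ => le_of_lt)
      fun y _ _ => (hp.1 y).1
  · simpa [filter_true_of_mem fun y _ => hxmax y (mem_univ y), hp.2] using hπ xmax
  · simpa [filter_false_of_mem fun y _ => not_lt.2 (hxmin y (mem_univ y))] using hδ xmin

end Bracket

end IsProbDist

section NestedBounds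

variable {ι : Type*} {P : ι → Prop} {S : ι → Set ℝ}

lemma sSup_sSup_le {c : ℝ} (hc : 0 ≤ c) (h : ∀ i, ∀ s ∈ S i, s ≤ c) :
    sSup {t | ∃ i, P i ∧ t = sSup (S i)} ≤ c :=
  Real.sSup_le (fun _ ⟨i, _, ht⟩ => ht ▸ Real.sSup_le (h i) hc) hc

lemma le_sSup_sSup {c : ℝ} (hc : 0 ≤ c) (h : ∀ i, ∀ s ∈ S i, s ≤ c) {i : ι} (hi : P i)
    {s : ℝ} (hs : s ∈ S i) : s ≤ sSup {t | ∃ i, P i ∧ t = sSup (S i)} :=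
  (le_csSup ⟨c, h i⟩ hs).trans
    (le_csSup ⟨c, fun _ ⟨j, _, ht⟩ => ht ▸ Real.sSup_le (h j) hc⟩ ⟨i, hi, rfl⟩)

lemma sInf_sInf_nonneg (h : ∀ i, ∀ s ∈ S i, 0 ≤ s) :
    0 ≤ sInf {t | ∃ i, P i ∧ t = sInf (S i)} :=
  Real.sInf_nonneg fun _ ⟨i, _, ht⟩ => ht ▸ Real.sInf_nonneg (h i)

lemma sInf_sInf_le (h : ∀ i, ∀ s ∈ S i, 0 ≤ s) {i : ι} (hi : P i) {s : ℝ} (hs : s ∈ S i) :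
    sInf {t | ∃ i, P i ∧ t = sInf (S i)} ≤ s := by
  have hbdd : BddBelow {t | ∃ i, P i ∧ t = sInf (S i)} :=
    ⟨0, fun _ ⟨j, _, ht⟩ => ht ▸ Real.sInf_nonneg (h j)⟩
  exact (csInf_le hbdd ⟨i, hi, rfl⟩).trans (csInf_le ⟨0, h i⟩ hs)

end NestedBounds

section SortKey

variable [Fintype X]

noncomputable def sortKey (p : X → ℝ) (x : X) : ℝ ×ₗ Fin (Fintype.card X) :=
  toLex (p x, Fintype.equivFin X x)

lemma sortKey_injective (p : X → ℝ) : Injective (sortKey p) := fun _ _ h =>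
  (Fintype.equivFin X).injective (congrArg Prod.snd (toLex.injective h))

lemma sortKey_lt_sortKey {p : X → ℝ} {a b : X} (h : p a < p b) : sortKey p a < sortKey p b :=
  Prod.Lex.toLex_lt_toLex.2 (Or.inl h)

lemma le_of_sortKey_lt {p : X → ℝ} {a b : X} (h : sortKey p a < sortKey p b) : p a ≤ p b :=
  Prod.Lex.monotone_fst _ _ h.le

end SortKey

lemma filter_lt_or_eq_eq_filter_le [Fintype X] {β : Type*} [LinearOrder β] {f : X → β}
    (hf : Injective f) (x : X) :
    univ.filter (fun y => f y < f x ∨ y = x) = univ.filter (fun y => f y ≤ f x) := by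
  ext y
  simp [le_iff_lt_or_eq, hf.eq_iff]

theorem probability_interval_to_cloud_general [Fintype X] (l u : X → ℝ)
    (PL : Set (X → ℝ))
    (hPL : PL = {p | IsProbDist p ∧ ∀ x, l x ≤ p x ∧ p x ≤ u x})
    (hne : PL.Nonempty)
    (Feasible : (X → X → Prop) → Prop)
    (hFeasible : ∀ R, Feasible R ↔
      (IsStrictTotalOrder X R ∧ (∀ x y, u x < l y → R x y) ∧
        ∃ p ∈ PL, ∀ x y, R x y → p x ≤ p y))
    (π δ : X → ℝ)
    (hπ : ∀ x, π x = sSup {t | ∃ R, Feasible R ∧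
      t = sSup {s | ∃ p ∈ PL, (∀ a b, R a b → p a ≤ p b) ∧
        s = ∑ y ∈ univ.filter (fun y => R y x ∨ y = x), p y}})
    (hδ : ∀ x, δ x = sInf {t | ∃ R, Feasible R ∧
      t = sInf {s | ∃ p ∈ PL, (∀ a b, R a b → p a ≤ p b) ∧
        s = ∑ y ∈ univ.filter (fun y => R y x), p y}}) :
    (∃ R, Feasible R) ∧ IsCloud δ π ∧ PL ⊆ credalCloud δ π := by
  have hdist : ∀ p ∈ PL, IsProbDist p := fun p hp => (hPL ▸ hp).1
  have hfeas : ∀ p ∈ PL, Feasible ((· < ·) on sortKey p) := by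
    intro p hp
    obtain ⟨-, hpb⟩ := hPL ▸ hp
    exact (hFeasible _).2 ⟨(sortKey_injective p).isStrictTotalOrder_onFun _,
      fun x y h => sortKey_lt_sortKey ((hpb x).2.trans_lt (h.trans_le (hpb y).1)),
      p, hp, fun _ _ => le_of_sortKey_lt⟩
  have hπ_le_one : ∀ x, π x ≤ 1 := fun x => by
    rw [hπ x]
    refine sSup_sSup_le zero_le_one ?_
    rintro R _ ⟨q, hq, -, rfl⟩
    exact (hdist q hq).sum_le_one _
  have hδ_nonneg : ∀ x, 0 ≤ δ x := fun x => by
    rw [hδ x]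
    refine sInf_sInf_nonneg ?_
    rintro R _ ⟨q, hq, -, rfl⟩
    exact (hdist q hq).sum_nonneg _
  have hδ_le : ∀ p ∈ PL, ∀ x,
      δ x ≤ ∑ y ∈ univ.filter (fun y => sortKey p y < sortKey p x), p y := fun p hp x => by
    rw [hδ x]
    refine sInf_sInf_le ?_ (hfeas p hp) ⟨p, hp, fun _ _ => le_of_sortKey_lt, rfl⟩
    rintro R _ ⟨q, hq, -, rfl⟩
    exact (hdist q hq).sum_nonneg _
  have hπ_ge : ∀ p ∈ PL, ∀ x,
      ∑ y ∈ univ.filter (fun y => sortKey p y ≤ sortKey p x), p y ≤ π x := fun p hp x => by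
    rw [hπ x, ← filter_lt_or_eq_eq_filter_le (sortKey_injective p)]
    refine le_sSup_sSup zero_le_one ?_ (hfeas p hp) ⟨p, hp, fun _ _ => le_of_sortKey_lt, rfl⟩
    rintro R _ ⟨q, hq, -, rfl⟩
    exact (hdist q hq).sum_le_one _
  obtain ⟨p₀, hp₀⟩ := hne
  exact ⟨⟨_, hfeas p₀ hp₀⟩,
    (hdist p₀ hp₀).isCloud hδ_nonneg hπ_le_one (hδ_le p₀ hp₀) (hπ_ge p₀ hp₀),
    fun p hp => (hdist p hp).mem_credalCloud (hδ_le p hp) (hπ_ge p hp)⟩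

/-- transformation of a probability interval `(l, u)` into an
outer-approximating cloud, à la Masson–Denoeux.  A strict total order `R` on
`X` is compatible with the interval if `u x < l y` implies `R x y`, and
feasible if moreover some `p` in the credal set `PL` is non-decreasing along
`R`.  Define `π x` as the largest, over feasible orders `R`, of the maximal
cumulated mass `∑_{y ⪯ x} p y` over non-decreasing `p ∈ PL`, and `δ x` as the
smallest, over feasible orders `R`, of the minimal cumulated mass
`∑_{y ≺ x} p y`.  Then a feasible order exists, `(δ, π)` is a cloud, and its
credal set outer-approximates `PL`. -/
theorem probability_interval_to_cloud [Fintype X] (l u : X → ℝ)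
    (hlu : ∀ x, 0 ≤ l x ∧ l x ≤ u x ∧ u x ≤ 1)
    (PL : Set (X → ℝ))
    (hPL : PL = {p | IsProbDist p ∧ ∀ x, l x ≤ p x ∧ p x ≤ u x})
    (hne : PL.Nonempty)
    (Feasible : (X → X → Prop) → Prop)
    (hFeasible : ∀ R, Feasible R ↔
      (IsStrictTotalOrder X R ∧ (∀ x y, u x < l y → R x y) ∧
        ∃ p ∈ PL, ∀ x y, R x y → p x ≤ p y))
    (π δ : X → ℝ)
    (hπ : ∀ x, π x = sSup {t | ∃ R, Feasible R ∧
      t = sSup {s | ∃ p ∈ PL, (∀ a b, R a b → p a ≤ p b) ∧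
        s = ∑ y ∈ univ.filter (fun y => R y x ∨ y = x), p y}})
    (hδ : ∀ x, δ x = sInf {t | ∃ R, Feasible R ∧
      t = sInf {s | ∃ p ∈ PL, (∀ a b, R a b → p a ≤ p b) ∧
        s = ∑ y ∈ univ.filter (fun y => R y x), p y}}) :
    (∃ R, Feasible R) ∧ IsCloud δ π ∧ PL ⊆ credalCloud δ π :=
  probability_interval_to_cloud_general l u PL hPL hne Feasible hFeasible π δ hπ hδ
end
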